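/- Closed form of the conditional distribution function F₂ₑ: in the slice model with κ > 0, for every x ≥ 0, (∫_{ℝ³} exp(−(κ+x)Λ₀ − κΛₕ) dμ) / (∫_{ℝ³} exp(−κ(Λ₀+Λₕ)) dμ) = (1 + x/(β+2κ))^{−b₀ₕ} (1 + x/(β+κ))^{−b₀}. The left-hand side is P(X₀ > x | X₀ > 0, X_h > 0) in the latent trawl model, so that F₂ₑ(x) := P(X₀ ≤ x | X₀ > 0, X_h > 0) = 1 − (1 + x/(β+2κ))^{−b₀ₕ} (1 + x/(β+κ))^{−b₀}. -/

import Mathlib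

open MeasureTheory ProbabilityTheory Real Set
open scoped ENNReal

/-! Both integrands factor as `e^{-A s₀} e^{-B s₂} e^{-C s₃}`, so each integral is a product of
Laplace transforms `(β / (β + t))^b` of the three Gamma marginals. The common factor of `Γ(bₕ, β)`
(evaluated at `κ` in both) cancels, and each remaining quotient is `(1 + x / (β + t))^{-b}`. -/

/-- The slice measure: product of three Gamma distributions with shapes
`b₀, b₀ₕ, bₕ` and common rate `β`. -/
noncomputable def sliceMeasure (b₀ b₀ₕ bₕ β : ℝ) : Measure (ℝ × ℝ × ℝ) :=
  (gammaMeasure b₀ β).prod ((gammaMeasure b₀ₕ β).prod (gammaMeasure bₕ β))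

noncomputable def gammaLaplace (a r t : ℝ) : ℝ := (r / (r + t)) ^ a

lemma gammaLaplace_pos {a r t : ℝ} (hr : 0 < r) (ht : 0 < r + t) : 0 < gammaLaplace a r t := by
  unfold gammaLaplace; positivity

lemma gammaLaplace_add_div_gammaLaplace {a r t : ℝ} (x : ℝ) (hr : 0 < r) (ht : 0 < r + t)
    (htx : 0 < r + (t + x)) :
    gammaLaplace a r (t + x) / gammaLaplace a r t = (1 + x / (r + t)) ^ (-a) := by
  unfold gammaLaplace
  have hpos : 0 < 1 + x / (r + t) := by
    rw [one_add_div ht.ne']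
    exact div_pos (by linarith) ht
  rw [← div_rpow (div_pos hr htx).le (div_pos hr ht).le, rpow_neg hpos.le, ← inv_rpow hpos.le]
  have : r + t + x ≠ 0 := by linarith
  congr 1
  field_simp
  ring

lemma integral_exp_neg_mul_gammaMeasure {a r t : ℝ} (ha : 0 < a) (hr : 0 < r) (ht : 0 < r + t) :
    ∫ y, exp (-t * y) ∂gammaMeasure a r = gammaLaplace a r t := by
  have hdensity : Measurable fun y ↦ (gammaPDFReal a r y).toNNReal :=
    (measurable_gammaPDFReal a r).real_toNNReal
  have hintegrand : ∀ y, (gammaPDFReal a r y).toNNReal • exp (-t * y)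
      = (Ici 0).indicator (fun y ↦ r ^ a / Gamma a * (y ^ (a - 1) * exp (-((r + t) * y)))) y := by
    intro y
    rw [NNReal.smul_def, smul_eq_mul, Real.coe_toNNReal _ (gammaPDFReal_nonneg ha hr y),
      gammaPDFReal]
    by_cases hy : 0 ≤ y
    · rw [indicator_of_mem (mem_Ici.mpr hy), if_pos hy,
        show -((r + t) * y) = -(r * y) + -t * y by ring, exp_add]
      ring
    · rw [indicator_of_notMem (by simpa using hy), if_neg hy, zero_mul]
  change ∫ y, exp (-t * y) ∂volume.withDensity (fun y ↦ ((gammaPDFReal a r y).toNNReal : ℝ≥0∞))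
    = _
  rw [integral_withDensity_eq_integral_smul hdensity]
  simp_rw [hintegrand]
  rw [integral_indicator measurableSet_Ici, integral_Ici_eq_integral_Ioi, integral_const_mul,
    integral_rpow_mul_exp_neg_mul_Ioi ha ht, gammaLaplace, div_rpow hr.le ht.le,
    div_rpow zero_le_one ht.le, one_rpow]
  have := (Gamma_pos_of_pos ha).ne'
  field_simp

lemma integral_exp_neg_sliceMeasure {β b₀ b₀ₕ bₕ : ℝ} (hβ : 0 < β) (hb₀ : 0 < b₀)
    (hb₀ₕ : 0 < b₀ₕ) (hbₕ : 0 < bₕ) {A B C : ℝ} (hA : 0 < β + A) (hB : 0 < β + B)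
    (hC : 0 < β + C) :
    ∫ s : ℝ × ℝ × ℝ, exp (-(A * s.1 + B * s.2.1 + C * s.2.2)) ∂sliceMeasure b₀ b₀ₕ bₕ β
      = gammaLaplace b₀ β A * (gammaLaplace b₀ₕ β B * gammaLaplace bₕ β C) := by
  have hfactor : ∀ s : ℝ × ℝ × ℝ, exp (-(A * s.1 + B * s.2.1 + C * s.2.2))
      = exp (-A * s.1) * (exp (-B * s.2.1) * exp (-C * s.2.2)) := fun s ↦ by
    rw [← exp_add, ← exp_add]; ring_nf
  have := isProbabilityMeasure_gammaMeasure hb₀ hβ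
  have := isProbabilityMeasure_gammaMeasure hb₀ₕ hβ
  have := isProbabilityMeasure_gammaMeasure hbₕ hβ
  simp_rw [hfactor]
  rw [sliceMeasure, integral_prod_mul (fun u ↦ exp (-A * u))
      (fun p : ℝ × ℝ ↦ exp (-B * p.1) * exp (-C * p.2)),
    integral_prod_mul (fun u ↦ exp (-B * u)) (fun u ↦ exp (-C * u)),
    integral_exp_neg_mul_gammaMeasure hb₀ hβ hA, integral_exp_neg_mul_gammaMeasure hb₀ₕ hβ hB,
    integral_exp_neg_mul_gammaMeasure hbₕ hβ hC]

/-- Closed form of the conditional distribution function `F₂ₑ`: with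
`Λ₀ = S₀ + S₀ₕ`, `Λₕ = S₀ₕ + Sₕ` in the slice model and `κ > 0`, for all `x ≥ 0`,
`P(X₀ > x | X₀ > 0, Xₕ > 0) = E[e^{-(κ+x)Λ₀ - κΛₕ}] / E[e^{-κ(Λ₀+Λₕ)}]`
`= (1 + x/(β+2κ))^{-b₀ₕ} (1 + x/(β+κ))^{-b₀}`, so that
`F₂ₑ(x) = 1 - (1 + x/(β+2κ))^{-b₀ₕ} (1 + x/(β+κ))^{-b₀}`. -/
theorem conditional_df_closed_form (β b₀ b₀ₕ bₕ κ : ℝ) (hβ : 0 < β)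
    (hb₀ : 0 < b₀) (hb₀ₕ : 0 < b₀ₕ) (hbₕ : 0 < bₕ) (hκ : 0 < κ) :
    ∀ x : ℝ, 0 ≤ x →
      (∫ s : ℝ × ℝ × ℝ,
          Real.exp (-(κ + x) * (s.1 + s.2.1) - κ * (s.2.1 + s.2.2))
          ∂(sliceMeasure b₀ b₀ₕ bₕ β))
        / (∫ s : ℝ × ℝ × ℝ,
          Real.exp (-κ * ((s.1 + s.2.1) + (s.2.1 + s.2.2)))
          ∂(sliceMeasure b₀ b₀ₕ bₕ β))
      = (1 + x / (β + 2 * κ)) ^ (-b₀ₕ) * (1 + x / (β + κ)) ^ (-b₀) := by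
  intro x hx
  have hnum : ∀ s : ℝ × ℝ × ℝ, -(κ + x) * (s.1 + s.2.1) - κ * (s.2.1 + s.2.2)
      = -((κ + x) * s.1 + (2 * κ + x) * s.2.1 + κ * s.2.2) := fun s ↦ by ring
  have hden : ∀ s : ℝ × ℝ × ℝ, -κ * ((s.1 + s.2.1) + (s.2.1 + s.2.2))
      = -(κ * s.1 + 2 * κ * s.2.1 + κ * s.2.2) := fun s ↦ by ring
  have hκ₁ : 0 < β + κ := by linarith
  have hκ₂ : 0 < β + 2 * κ := by linarith
  simp_rw [hnum, hden]
  rw [integral_exp_neg_sliceMeasure hβ hb₀ hb₀ₕ hbₕ (by linarith) (by linarith) hκ₁,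
    integral_exp_neg_sliceMeasure hβ hb₀ hb₀ₕ hbₕ hκ₁ hκ₂ hκ₁,
    mul_div_mul_comm, mul_div_mul_right _ _ (gammaLaplace_pos hβ hκ₁).ne',
    gammaLaplace_add_div_gammaLaplace x hβ hκ₁ (by linarith),
    gammaLaplace_add_div_gammaLaplace x hβ hκ₂ (by linarith), mul_comm]
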